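/- arXiv:1301.6796 — 2 statements merged into one kernel-verified Lean document; each statement's English description precedes it below -/
import Mathlib

section
/- For every permutation p of length k with doubling number t, there exists an alternating permutation of length k + t that contains p. -/
def IsAlternating {n : ℕ} (w : Equiv.Perm (Fin n)) : Prop :=
  ∀ (i : ℕ) (h : i + 1 < n),
    if i % 2 = 0 then w ⟨i, by omega⟩ < w ⟨i + 1, h⟩
    else w ⟨i + 1, h⟩ < w ⟨i, by omega⟩

def ContainsPat {n b : ℕ} (w : Equiv.Perm (Fin n)) (q : Equiv.Perm (Fin b)) : Prop :=
  ∃ f : Fin b → Fin n, StrictMono f ∧ ∀ i j : Fin b, q i < q j ↔ w (f i) < w (f j)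

/-- The `j`-th entry (1-indexed) of the permutation `w`, as a value in `1..k`,
with the convention that the 0-th entry is `k+1` (playing the role of `+∞`). -/
def entryVal {k : ℕ} (w : Equiv.Perm (Fin k)) (j : ℕ) : ℕ :=
  if j = 0 then k + 1 else if h : j - 1 < k then (w ⟨j - 1, h⟩).val + 1 else 0

/-- The doubling set `d(p) = { i ∈ [k-1] : p(i-1) > p(i) > p(i+1) or p(i-1) < p(i) < p(i+1) }`,
with `p(0) = +∞`. -/
def doublingSet {k : ℕ} (w : Equiv.Perm (Fin k)) : Finset ℕ :=
  (Finset.Ico 1 k).filter fun i =>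
    (entryVal w (i - 1) > entryVal w i ∧ entryVal w i > entryVal w (i + 1)) ∨
    (entryVal w (i - 1) < entryVal w i ∧ entryVal w i < entryVal w (i + 1))

def doublingNumber {k : ℕ} (w : Equiv.Perm (Fin k)) : ℕ := (doublingSet w).card

/-!
Walk through `p` with the convention `p(0) = +∞`. An entry `p(i)` that is neither a peak nor a
valley sits on a monotone run `p(i-1), p(i), p(i+1)`; right after it insert a new entry that is
larger than everything if the run descends and smaller than everything if it ascends. This turns
`p(i)` into a valley (resp. peak), the new entry into a peak (resp. valley), and leaves the
direction in which `p(i+1)` is reached unchanged. In the resulting word of length `k + t` every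
entry is a peak or a valley and the first step rises (it follows a descent from `+∞`), so its
standardization is alternating, and the original entries form an occurrence of `p`.
-/

section Zigzag

variable {α : Type*} [LT α]

def Zigzag : Bool → List α → Prop
  | up, a :: b :: l => (if up then a < b else b < a) ∧ Zigzag (!up) (b :: l)
  | _, _ => True

theorem Zigzag.getElem {up : Bool} {l : List α} (h : Zigzag up l) {m : ℕ}
    (hm : m + 1 < l.length) :
    if decide (m % 2 = 0) = up then l[m] < l[m + 1] else l[m + 1] < l[m] := by
  induction l generalizing up m with
  | nil => simp at hm
  | cons a t ih =>
    match t, m, h with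
    | b :: t, 0, ⟨hab, _⟩ => cases up <;> simpa using hab
    | b :: t, m + 1, ⟨_, h⟩ =>
      have := ih h (m := m) (by simpa using hm)
      cases up <;> rcases Nat.mod_two_eq_zero_or_one m with hm2 | hm2 <;>
        simpa [Nat.succ_mod_two_eq_zero_iff, hm2] using this

end Zigzag

theorem exists_perm_lt_iff_of_injective {α : Type*} [LinearOrder α] {n : ℕ} {g : Fin n → α}
    (hg : Function.Injective g) : ∃ w : Equiv.Perm (Fin n), ∀ a b, w a < w b ↔ g a < g b := by
  classical
  let e : Fin n ≃o Finset.univ.image g := (Finset.univ.image g).orderIsoOfFin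
    (by rw [Finset.card_image_of_injective _ hg, Finset.card_fin])
  let f : Fin n → Fin n := fun a => e.symm ⟨g a, by simp⟩
  have hf : Function.Injective f := fun a b hab => hg (by simpa [f] using hab)
  refine ⟨Equiv.ofBijective f hf.bijective_of_finite, fun a b => ?_⟩
  simp only [Equiv.ofBijective_apply, f, e.symm.lt_iff_lt, Subtype.mk_lt_mk]

theorem exists_isAlternating_containsPat_of_zigzag {α : Type*} [LinearOrder α] {q : List α}
    (hq : q.Nodup) (hz : Zigzag true q) {k : ℕ} (p : Equiv.Perm (Fin k)) {s : Fin k → α}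
    (hs : (List.ofFn s).Sublist q) (hps : ∀ i j, p i < p j ↔ s i < s j) :
    ∃ w : Equiv.Perm (Fin q.length), IsAlternating w ∧ ContainsPat w p := by
  obtain ⟨w, hw⟩ := exists_perm_lt_iff_of_injective (g := fun m : Fin q.length => q[m])
    fun a b hab => Fin.ext (hq.getElem_inj_iff.1 hab)
  obtain ⟨f, hf⟩ := List.sublist_iff_exists_fin_orderEmbedding_get_eq.1 hs
  refine ⟨w, fun m hm => ?_, fun j => f (Fin.cast List.length_ofFn.symm j),
    fun a b hab => f.strictMono hab, fun a b => ?_⟩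
  · have := hz.getElem hm
    split_ifs at this ⊢ <;> simp_all
  · have ha := hf (Fin.cast List.length_ofFn.symm a)
    have hb := hf (Fin.cast List.length_ofFn.symm b)
    simp_all

section DoubledWord

variable {k : ℕ} (p : Equiv.Perm (Fin k))

theorem entryVal_zero : entryVal p 0 = k + 1 := if_pos rfl

theorem entryVal_of_pos {j : ℕ} (hj : 1 ≤ j) (hjk : j ≤ k) :
    entryVal p j = p ⟨j - 1, by omega⟩ + 1 := by
  rw [entryVal, if_neg (by omega), dif_pos (by omega)]

theorem entryVal_succ_lt_succ_iff (i j : Fin k) :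
    entryVal p (i + 1) < entryVal p (j + 1) ↔ p i < p j := by
  rw [entryVal_of_pos p (by omega) i.isLt, entryVal_of_pos p (by omega) j.isLt]
  simp only [Nat.succ_sub_one, Fin.eta, add_lt_add_iff_right, Fin.val_fin_lt]

theorem entryVal_le {j : ℕ} (hj : 1 ≤ j) : entryVal p j ≤ k := by
  unfold entryVal
  split_ifs
  · omega
  · exact (p _).isLt
  · omega

theorem entryVal_le_succ (j : ℕ) : entryVal p j ≤ k + 1 := by
  rcases Nat.eq_zero_or_pos j with rfl | hj
  · exact (entryVal_zero p).le
  · exact (entryVal_le p hj).trans k.le_succ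

theorem entryVal_injOn : Set.InjOn (entryVal p) (Set.Iic k) := by
  intro a ha b hb hab
  simp only [Set.mem_Iic] at ha hb
  rcases Nat.eq_zero_or_pos a with rfl | ha0 <;> rcases Nat.eq_zero_or_pos b with rfl | hb0
  · rfl
  · have := entryVal_le p hb0; rw [entryVal_zero] at hab; omega
  · have := entryVal_le p ha0; rw [entryVal_zero] at hab; omega
  · rw [entryVal_of_pos p ha0 ha, entryVal_of_pos p hb0 hb, add_left_inj, Fin.val_inj,
      p.apply_eq_iff_eq, Fin.mk.injEq] at hab
    omega

theorem mem_doublingSet {i : ℕ} : i ∈ doublingSet p ↔ 1 ≤ i ∧ i < k ∧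
    ((entryVal p i < entryVal p (i - 1) ∧ entryVal p (i + 1) < entryVal p i) ∨
      (entryVal p (i - 1) < entryVal p i ∧ entryVal p i < entryVal p (i + 1))) := by
  simp [doublingSet, and_assoc]

theorem mem_doublingSet_iff_lt_iff {i : ℕ} (hi : 1 ≤ i) (hik : i < k) :
    i ∈ doublingSet p ↔
      (entryVal p (i + 1) < entryVal p i ↔ entryVal p i < entryVal p (i - 1)) := by
  have hprev : entryVal p (i - 1) ≠ entryVal p i :=
    fun h => absurd (entryVal_injOn p (by simp; omega) (by simp; omega) h) (by omega)
  have hsucc : entryVal p i ≠ entryVal p (i + 1) :=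
    fun h => absurd (entryVal_injOn p (by simp; omega) (by simp; omega) h) (by omega)
  rw [mem_doublingSet]
  grind

/-- Entries are at most `k + 1`, so `k + 1 + i` lies above all of them and `-i` below them;
distinct `i` give distinct values. -/
def extraEntry (i : ℕ) : ℤ := if entryVal p i < entryVal p (i - 1) then k + 1 + i else -i

def block (i : ℕ) : List ℤ :=
  (entryVal p i : ℤ) :: if i ∈ doublingSet p then [extraEntry p i] else []

def doubledWord : List ℤ := (List.range' 1 k).flatMap (block p)

theorem extraEntry_injective : Function.Injective (extraEntry p) := by
  intro a b hab
  unfold extraEntry at hab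
  split_ifs at hab <;> omega

theorem entryVal_ne_extraEntry (j : ℕ) {i : ℕ} (hi : 1 ≤ i) :
    (entryVal p j : ℤ) ≠ extraEntry p i := by
  have := entryVal_le_succ p j
  unfold extraEntry
  split_ifs <;> omega

theorem length_doubledWord : (doubledWord p).length = k + doublingNumber p := by
  have hsub : doublingSet p ⊆ (List.range' 1 k).toFinset := fun i hi => by
    have := (mem_doublingSet p).1 hi
    simp only [List.mem_toFinset, List.mem_range'_1]
    omega
  have hlen : ∀ i, (block p i).length = 1 + if i ∈ doublingSet p then 1 else 0 := fun i => by
    unfold block; split_ifs <;> simp [add_comm]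
  rw [doubledWord, List.length_flatMap, funext hlen, List.sum_map_add, List.map_const',
    List.sum_replicate, List.length_range', smul_eq_mul, mul_one,
    ← List.sum_toFinset _ List.nodup_range', Finset.sum_boole, Finset.filter_mem_eq_inter,
    Finset.inter_eq_right.2 hsub, Nat.cast_id, doublingNumber]

theorem nodup_doubledWord : (doubledWord p).Nodup := by
  have hmem : ∀ {i c}, c ∈ block p i → c = entryVal p i ∨ c = extraEntry p i := by
    intro i c hc
    unfold block at hc
    split_ifs at hc <;> simp_all
  refine List.nodup_flatMap.2 ⟨fun i hi => ?_,
    (List.nodup_range' (s := 1) (n := k)).pairwise_of_forall_ne ?_⟩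
  · rw [List.mem_range'_1] at hi
    unfold block
    split_ifs
    · simpa using entryVal_ne_extraEntry p i hi.1
    · simp
  · intro a ha b hb hab c hca hcb
    rw [List.mem_range'_1] at ha hb
    rcases hmem hca with rfl | rfl <;> rcases hmem hcb with h | h
    · exact hab (entryVal_injOn p (by simp; omega) (by simp; omega) (by exact_mod_cast h))
    · exact entryVal_ne_extraEntry p a hb.1 h
    · exact entryVal_ne_extraEntry p b ha.1 h.symm
    · exact hab (extraEntry_injective p h)

theorem zigzag_flatMap_block {i n : ℕ} (hi : 1 ≤ i) (hin : i + n = k + 1) :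
    Zigzag (decide (entryVal p i < entryVal p (i - 1)))
      ((List.range' i n).flatMap (block p)) := by
  induction n generalizing i with
  | zero => trivial
  | succ n ih =>
    rw [List.range'_succ, List.flatMap_cons]
    rcases n with _ | n
    · have hk : i ∉ doublingSet p := fun h => by have := (mem_doublingSet p).1 h; omega
      simp only [block, if_neg hk]
      trivial
    obtain ⟨rest, hrest⟩ : ∃ rest, (List.range' (i + 1) (n + 1)).flatMap (block p) =
        (entryVal p (i + 1) : ℤ) :: rest := ⟨_, by rw [List.range'_succ, List.flatMap_cons]; rfl⟩
    have hnext := ih (i := i + 1) (by omega) (by omega)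
    rw [hrest, Nat.add_sub_cancel] at hnext
    rw [hrest]
    have hdoubling := mem_doublingSet_iff_lt_iff p hi (by omega : i < k)
    by_cases hd : i ∈ doublingSet p
    · rw [decide_eq_decide.2 (hdoubling.1 hd)] at hnext
      simp only [block, if_pos hd, List.cons_append, List.nil_append, extraEntry]
      have := entryVal_le_succ p (i - 1)
      have := entryVal_le_succ p (i + 1)
      refine ⟨?_, ?_, by rwa [Bool.not_not]⟩ <;>
        by_cases h : entryVal p i < entryVal p (i - 1) <;> simp [h] <;> omega
    · rw [Bool.eq_not_iff.2 (mt decide_eq_decide.1 (mt hdoubling.2 hd))] at hnext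
      simp only [block, if_neg hd, List.cons_append, List.nil_append]
      refine ⟨?_, hnext⟩
      have hsucc : entryVal p i ≠ entryVal p (i + 1) :=
        fun h => absurd (entryVal_injOn p (by simp; omega) (by simp; omega) h) (by omega)
      grind

theorem zigzag_doubledWord : Zigzag true (doubledWord p) := by
  have hstart : entryVal p 1 < entryVal p 0 := by
    rw [entryVal_zero]; exact Nat.lt_succ_of_le (entryVal_le p le_rfl)
  have h := zigzag_flatMap_block p le_rfl (n := k) (by omega)
  rwa [Nat.sub_self, decide_eq_true hstart] at h

theorem ofFn_entryVal_sublist_doubledWord :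
    (List.ofFn fun j : Fin k => (entryVal p (j + 1) : ℤ)).Sublist (doubledWord p) := by
  have hofFn : (List.ofFn fun j : Fin k => (entryVal p (j + 1) : ℤ)) =
      (List.range' 1 k).map fun i => (entryVal p i : ℤ) :=
    List.ext_getElem (by simp) fun m _ _ => by simp [add_comm]
  rw [hofFn, List.map_eq_flatMap]
  exact List.Sublist.flatMap_right _ fun i _ => List.singleton_sublist.2 List.mem_cons_self

end DoubledWord

theorem stmt2 (k : ℕ) (p : Equiv.Perm (Fin k)) :
    ∃ w : Equiv.Perm (Fin (k + doublingNumber p)), IsAlternating w ∧ ContainsPat w p := by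
  rw [← length_doubledWord]
  exact exists_isAlternating_containsPat_of_zigzag (nodup_doubledWord p) (zigzag_doubledWord p) p
    (ofFn_entryVal_sublist_doubledWord p) fun i j => by rw [Nat.cast_lt, entryVal_succ_lt_succ_iff]
end

section
/- For a permutation p of length k with doubling number t, the minimal length of an alternating permutation that contains p is exactly k + t. -/
noncomputable def stdPerm {n : ℕ} (v : Fin n → ℕ) (hv : Function.Injective v) :
    Equiv.Perm (Fin n) :=
  (Equiv.ofBijective (fun i => (⟨v i, by simp⟩ : {x // x ∈ Finset.image v Finset.univ}))
    (by
      refine (Fintype.bijective_iff_injective_and_card _).mpr ⟨fun i j h => hv (by simpa using h), ?_⟩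
      simp [Finset.card_image_of_injective _ hv])).trans
    ((Finset.image v Finset.univ).orderIsoOfFin
      (by simp [Finset.card_image_of_injective _ hv])).toEquiv.symm

theorem stdPerm_lt {n : ℕ} (v : Fin n → ℕ) (hv : Function.Injective v) (i j : Fin n) :
    stdPerm v hv i < stdPerm v hv j ↔ v i < v j := by
  simp only [stdPerm, Equiv.trans_apply]
  rw [← OrderIso.lt_iff_lt ((Finset.image v Finset.univ).orderIsoOfFin (by simp [Finset.card_image_of_injective _ hv]))]
  simp [Equiv.ofBijective, Subtype.mk_lt_mk]


def dSet (a : ℕ → ℕ) (k : ℕ) : Finset ℕ :=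
  (Finset.Ico 1 k).filter fun i =>
    (a (i - 1) > a i ∧ a i > a (i + 1)) ∨ (a (i - 1) < a i ∧ a i < a (i + 1))

def Dc (a : ℕ → ℕ) (k i : ℕ) : ℕ := ((dSet a k).filter (· ≤ i)).card

def qPos (a : ℕ → ℕ) (k i : ℕ) : ℕ := i - 1 + Dc a k i

lemma mem_dSet {a : ℕ → ℕ} {k j : ℕ} :
    j ∈ dSet a k ↔ 1 ≤ j ∧ j < k ∧
      ((a (j - 1) > a j ∧ a j > a (j + 1)) ∨ (a (j - 1) < a j ∧ a j < a (j + 1))) := by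
  simp [dSet, Finset.mem_filter, Finset.mem_Ico, and_assoc]

lemma mem_dSet_lt {a : ℕ → ℕ} {k j : ℕ} (h : j ∈ dSet a k) : 1 ≤ j ∧ j < k :=
  ⟨(mem_dSet.1 h).1, (mem_dSet.1 h).2.1⟩

lemma Dc_succ (a : ℕ → ℕ) (k i : ℕ) :
    Dc a k (i + 1) = Dc a k i + (if i + 1 ∈ dSet a k then 1 else 0) := by
  unfold Dc
  have h1 : ((dSet a k).filter (· ≤ i + 1)) =
      ((dSet a k).filter (· ≤ i)) ∪ ((dSet a k).filter (· = i + 1)) := by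
    rw [← Finset.filter_or]
    apply Finset.filter_congr
    intro x _
    constructor
    · intro h; omega
    · intro h; omega
  rw [h1, Finset.card_union_of_disjoint, Finset.filter_eq']
  · split <;> simp
  · rw [Finset.disjoint_filter]
    intro x _ hx hx2
    omega

lemma Dc_one (a : ℕ → ℕ) (k : ℕ) :
    Dc a k 1 = if 1 ∈ dSet a k then 1 else 0 := by
  unfold Dc
  have h1 : ((dSet a k).filter (· ≤ 1)) = ((dSet a k).filter (· = 1)) := by
    apply Finset.filter_congr
    intro x hx
    have := mem_dSet_lt hx
    constructor
    · intro h; omega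
    · intro h; omega
  rw [h1, Finset.filter_eq']
  split <;> simp

lemma Dc_top (a : ℕ → ℕ) (k : ℕ) : Dc a k k = (dSet a k).card := by
  unfold Dc
  congr 1
  apply Finset.filter_true_of_mem
  intro x hx
  have := mem_dSet_lt hx
  omega

lemma Dc_le_one (a : ℕ → ℕ) (k : ℕ) : Dc a k 1 ≤ 1 := by
  rw [Dc_one]; split <;> simp

lemma q_one (a : ℕ → ℕ) (k : ℕ) : qPos a k 1 = Dc a k 1 := by
  simp [qPos]

lemma q_succ (a : ℕ → ℕ) (k : ℕ) {i : ℕ} (hi : 1 ≤ i) :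
    qPos a k (i + 1) = qPos a k i + 1 + (if i + 1 ∈ dSet a k then 1 else 0) := by
  unfold qPos
  rw [Dc_succ]
  omega

lemma q_succ_le (a : ℕ → ℕ) (k : ℕ) {i : ℕ} (hi : 1 ≤ i) :
    qPos a k i + 1 ≤ qPos a k (i + 1) ∧ qPos a k (i + 1) ≤ qPos a k i + 2 := by
  rw [q_succ a k hi]; split <;> omega

lemma q_lt (a : ℕ → ℕ) (k : ℕ) {i j : ℕ} (hi : 1 ≤ i) (hij : i < j) :
    qPos a k i < qPos a k j := by
  induction j, hij using Nat.le_induction with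
  | base =>
    show qPos a k i < qPos a k (i + 1)
    have := q_succ_le a k hi; omega
  | succ m hm ih => have := q_succ_le a k (by omega : 1 ≤ m); omega

lemma q_top (a : ℕ → ℕ) (k : ℕ) (hk : 1 ≤ k) :
    qPos a k k = k - 1 + (dSet a k).card := by
  unfold qPos; rw [Dc_top]

section Core

variable {a : ℕ → ℕ} {k : ℕ}
  (ha0 : ∀ i, 1 ≤ i → i ≤ k → a i < a 0)
  (hinj : ∀ i j, 1 ≤ i → i ≤ k → 1 ≤ j → j ≤ k → a i = a j → i = j)

include hinj in
lemma a_lt_or {i j : ℕ} (hi : 1 ≤ i) (hik : i ≤ k) (hj : 1 ≤ j) (hjk : j ≤ k) (hij : i ≠ j) :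
    a i < a j ∨ a j < a i := by
  rcases lt_trichotomy (a i) (a j) with h | h | h
  · exact Or.inl h
  · exact absurd (hinj i j hi hik hj hjk h) hij
  · exact Or.inr h

include ha0 hinj in
lemma one_mem_dSet (hk : 1 < k) : 1 ∈ dSet a k ↔ a 2 < a 1 := by
  rw [mem_dSet]
  have h0 : a 1 < a 0 := ha0 1 (by omega) (by omega)
  constructor
  · rintro ⟨-, -, (⟨-, h⟩ | ⟨h, -⟩)⟩
    · exact h
    · simp at h; omega
  · intro h
    exact ⟨le_refl 1, hk, Or.inl ⟨by simpa using h0, h⟩⟩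

include hinj in
lemma succ_mem_dSet {j : ℕ} (hj : 1 ≤ j) (hjk : j + 1 < k) :
    (j + 1 ∈ dSet a k ↔ ((a j < a (j+1)) ↔ (a (j+1) < a (j+2)))) := by
  rw [mem_dSet]
  have e1 : j + 1 - 1 = j := by omega
  have e2 : j + 1 + 1 = j + 2 := by omega
  rw [e1, e2]
  have h1 := a_lt_or hinj hj (by omega) (by omega : 1 ≤ j+1) (by omega : j+1 ≤ k) (by omega)
  have h2 := a_lt_or hinj (by omega : 1 ≤ j+1) (by omega) (by omega : 1 ≤ j+2) (by omega : j+2 ≤ k) (by omega)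
  constructor
  · rintro ⟨-, -, (⟨hA, hB⟩ | ⟨hA, hB⟩)⟩
    · constructor
      · intro h; omega
      · intro h; omega
    · constructor
      · intro h; exact hB
      · intro h; omega
  · intro h
    refine ⟨by omega, hjk, ?_⟩
    rcases h1 with h1 | h1
    · exact Or.inr ⟨h1, h.1 h1⟩
    · left
      refine ⟨h1, ?_⟩
      rcases h2 with h2 | h2
      · exfalso; have := h.2 h2; omega
      · exact h2

include ha0 hinj in
lemma parity_lemma : ∀ j, 1 ≤ j → j < k → (qPos a k j % 2 = 0 ↔ a j < a (j + 1)) := by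
  intro j hj
  induction j, hj using Nat.le_induction with
  | base =>
    intro hk
    have h1 := a_lt_or hinj (le_refl 1) (by omega) (by omega : 1 ≤ 2) (by omega : 2 ≤ k) (by omega)
    have hmem := one_mem_dSet ha0 hinj hk
    have e : (1:ℕ) + 1 = 2 := by norm_num
    rw [q_one, Dc_one, e]
    by_cases h : (1:ℕ) ∈ dSet a k
    · have h2 := hmem.1 h
      rw [if_pos h]
      constructor
      · intro hh; omega
      · intro hh; omega
    · have h2 : ¬ a 2 < a 1 := fun hh => h (hmem.2 hh)
      rw [if_neg h]
      constructor
      · intro hh; omega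
      · intro hh; omega
  | succ m hm ih =>
    intro hk
    have ihm := ih (by omega)
    have e : m + 1 + 1 = m + 2 := by omega
    rw [q_succ a k hm, e]
    have hmem := succ_mem_dSet hinj hm hk
    have h2 := a_lt_or hinj (by omega : 1 ≤ m+1) (by omega) (by omega : 1 ≤ m+2) (by omega : m+2 ≤ k) (by omega)
    have h3 := a_lt_or hinj (by omega : 1 ≤ m) (by omega) (by omega : 1 ≤ m+1) (by omega : m+1 ≤ k) (by omega)
    by_cases h : m + 1 ∈ dSet a k
    · have hiff := hmem.1 h
      rw [if_pos h]
      constructor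
      · intro hh
        have : qPos a k m % 2 = 0 := by omega
        exact hiff.1 (ihm.1 this)
      · intro hh
        have : a m < a (m+1) := hiff.2 hh
        have := ihm.2 this
        omega
    · have hiff : ¬ ((a m < a (m+1)) ↔ (a (m+1) < a (m+2))) := fun hh => h (hmem.2 hh)
      rw [if_neg h]
      constructor
      · intro hh
        have hq : ¬ qPos a k m % 2 = 0 := by omega
        have hnm : ¬ a m < a (m+1) := fun hc => hq (ihm.2 hc)
        by_contra hc
        exact hiff ⟨fun h4 => absurd h4 hnm, fun h4 => absurd h4 hc⟩
      · intro hh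
        have hnm : ¬ a m < a (m+1) := fun hc => hiff ⟨fun _ => hh, fun _ => hc⟩
        have : ¬ qPos a k m % 2 = 0 := fun hc => hnm (ihm.1 hc)
        omega

include ha0 hinj in
lemma lower_core (hk : 1 ≤ k) (n : ℕ) (b : ℕ → ℕ)
    (halt : ∀ m, m + 1 < n → ((m % 2 = 0 → b m < b (m + 1)) ∧ (m % 2 = 1 → b (m + 1) < b m)))
    (q : ℕ → ℕ) (hqn : ∀ i, 1 ≤ i → i ≤ k → q i < n)
    (hmono : ∀ i, 1 ≤ i → i < k → q i < q (i + 1))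
    (hpat : ∀ i j, 1 ≤ i → i ≤ k → 1 ≤ j → j ≤ k → (a i < a j ↔ b (q i) < b (q j))) :
    k + (dSet a k).card ≤ n := by
  rcases Nat.lt_or_ge k 2 with hk2 | hk2
  · have hk1 : k = 1 := by omega
    subst hk1
    have hd : dSet a 1 = ∅ := by
      apply Finset.eq_empty_of_forall_notMem
      intro x hx; have := mem_dSet_lt hx; omega
    have := hqn 1 le_rfl (by omega)
    rw [hd]
    simp
    omega
  -- gap-1 parity fact
  have hgap : ∀ i, 1 ≤ i → i < k → q (i + 1) = q i + 1 →
      (q i % 2 = 0 ↔ a i < a (i + 1)) := by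
    intro i hi hik hq1
    have hqn' : q i + 1 < n := by
      have := hqn (i + 1) (by omega) (by omega); omega
    have halt' := halt (q i) hqn'
    have hp := hpat i (i + 1) hi (by omega) (by omega) (by omega)
    have hp' := hpat (i + 1) i (by omega) (by omega) hi (by omega)
    constructor
    · intro h0
      have hb : b (q i) < b (q (i + 1)) := by rw [hq1]; exact halt'.1 h0
      exact hp.2 hb
    · intro h
      by_contra h0
      have h1 : q i % 2 = 1 := by omega
      have hb : b (q (i + 1)) < b (q i) := by rw [hq1]; exact halt'.2 h1
      have := hp'.2 hb
      omega
  -- the invariant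
  have claim : ∀ i, 1 ≤ i → i ≤ k - 1 →
      i - 1 + Dc a k i ≤
        (if (q i % 2 = 0 ↔ a i < a (i + 1)) then q i else q i + 1) := by
    intro i hi
    induction i, hi using Nat.le_induction with
    | base =>
      intro hik
      rw [Dc_one]
      by_cases h : (1 : ℕ) ∈ dSet a k
      · have h21 : a 2 < a 1 := (one_mem_dSet ha0 hinj (by omega)).1 h
        have e2 : (1 : ℕ) + 1 = 2 := by norm_num
        rw [if_pos h, e2]
        have hna : ¬ a 1 < a 2 := by omega
        by_cases hq : q 1 % 2 = 0
        · rw [if_neg (by tauto)]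
          omega
        · rw [if_pos (by tauto)]
          omega
      · rw [if_neg h]
        split <;> omega
    | succ i hi ih =>
      intro hik
      have ihi := ih (by omega)
      have hik' : i + 1 < k := by omega
      have hmem := succ_mem_dSet hinj hi hik'
      have e2 : i + 1 + 1 = i + 2 := by omega
      rw [Dc_succ, e2]
      have hlo1 := a_lt_or hinj hi (by omega) (by omega : 1 ≤ i + 1) (by omega) (by omega)
      have hlo2 := a_lt_or hinj (by omega : 1 ≤ i + 1) (by omega) (by omega : 1 ≤ i + 2) (by omega) (by omega)
      have hmono1 := hmono i hi (by omega)
      by_cases hq1 : q (i + 1) = q i + 1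
      · -- gap 1 case: parity of q i is forced
        have hpar := hgap i hi (by omega) hq1
        have hAi : (if (q i % 2 = 0 ↔ a i < a (i + 1)) then q i else q i + 1) = q i := by
          rw [if_pos hpar]
        rw [hAi] at ihi
        by_cases hd : i + 1 ∈ dSet a k
        · have hiff := hmem.1 hd
          rw [if_pos hd]
          -- e (i+1) = e i, parity flipped, so A (i+1) = q (i+1) + 1
          have : ¬ (q (i + 1) % 2 = 0 ↔ a (i + 1) < a (i + 2)) := by
            intro hc
            rcases Nat.lt_or_ge (a i) (a (i + 1)) with h | h
            · have h2 := hiff.1 h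
              have := hpar.2 h
              have := hc.2 h2
              omega
            · have hni : ¬ a i < a (i + 1) := by omega
              have hni2 : ¬ a (i + 1) < a (i + 2) := fun hc2 => hni (hiff.2 hc2)
              have hq0 : ¬ q i % 2 = 0 := fun hc2 => hni (hpar.1 hc2)
              have : ¬ q (i + 1) % 2 = 0 := by omega
              exact hni2 (hc.1 (by omega))
          rw [if_neg this]
          omega
        · have hiff : ¬ ((a i < a (i + 1)) ↔ (a (i + 1) < a (i + 2))) :=
            fun hc => hd (hmem.2 hc)
          rw [if_neg hd]
          have : (q (i + 1) % 2 = 0 ↔ a (i + 1) < a (i + 2)) := by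
            constructor
            · intro hc
              have hq0 : ¬ q i % 2 = 0 := by omega
              have hni : ¬ a i < a (i + 1) := fun hc2 => hq0 (hpar.2 hc2)
              rcases hlo2 with h | h
              · exact h
              · exfalso
                exact hiff ⟨fun h2 => absurd h2 hni, fun h2 => by omega⟩
            · intro hc
              have hni : ¬ a i < a (i + 1) := fun hc2 => hiff ⟨fun _ => hc, fun _ => hc2⟩
              have : ¬ q i % 2 = 0 := fun hc2 => hni (hpar.1 hc2)
              omega
          rw [if_pos this]
          omega
      · -- gap ≥ 2
        have hgap2 : q i + 2 ≤ q (i + 1) := by omega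
        by_cases hd : i + 1 ∈ dSet a k
        · have hiff := hmem.1 hd
          rw [if_pos hd]
          rcases Nat.lt_or_ge (q i + 2) (q (i + 1)) with h3 | h3
          · split <;> split at ihi <;> omega
          · -- q (i+1) = q i + 2 exactly, same parity
            have hq2 : q (i + 1) = q i + 2 := by omega
            by_cases hpi : (q i % 2 = 0 ↔ a i < a (i + 1))
            · rw [if_pos hpi] at ihi
              split <;> omega
            · rw [if_neg hpi] at ihi
              have : ¬ (q (i + 1) % 2 = 0 ↔ a (i + 1) < a (i + 2)) := by
                intro hc
                apply hpi
                constructor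
                · intro h0
                  have : q (i + 1) % 2 = 0 := by omega
                  exact hiff.2 (hc.1 this)
                · intro h0
                  have := hc.2 (hiff.1 h0)
                  omega
              rw [if_neg this]
              omega
        · rw [if_neg hd]
          split <;> split at ihi <;> omega
  -- conclude
  have hDtop : Dc a k (k - 1) = (dSet a k).card := by
    unfold Dc
    congr 1
    apply Finset.filter_true_of_mem
    intro x hx
    have := mem_dSet_lt hx
    omega
  have hcl := claim (k - 1) (by omega) le_rfl
  rw [hDtop] at hcl
  have ekk0 : k - 1 + 1 = k := by omega
  rw [ekk0] at hcl
  have hqkn := hqn k (by omega) le_rfl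
  have hmk := hmono (k - 1) (by omega) (by omega)
  have ekk : k - 1 + 1 = k := by omega
  rw [ekk] at hmk
  by_cases hq1 : q k = q (k - 1) + 1
  · have hpar := hgap (k - 1) (by omega) (by omega) (by rw [ekk]; exact hq1)
    rw [ekk] at hpar
    rw [if_pos hpar] at hcl
    omega
  · have : q (k - 1) + 2 ≤ q k := by omega
    split at hcl <;> omega

/-- index of the first pattern position `≥ m`. -/
def idxF (Q : ℕ → ℕ) (k m : ℕ) : ℕ :=
  Nat.find (p := fun i => k ≤ i ∨ (1 ≤ i ∧ m ≤ Q i)) ⟨k, Or.inl le_rfl⟩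

lemma idx_le (Q : ℕ → ℕ) (k m : ℕ) : idxF Q k m ≤ k := Nat.find_le (Or.inl le_rfl)

lemma idx_min {Q : ℕ → ℕ} {k m j : ℕ} (h1 : 1 ≤ j) (h2 : j < idxF Q k m) : Q j < m := by
  have h3 : ¬ (k ≤ j ∨ (1 ≤ j ∧ m ≤ Q j)) :=
    Nat.find_min (p := fun i => k ≤ i ∨ (1 ≤ i ∧ m ≤ Q i)) ⟨k, Or.inl le_rfl⟩ h2
  omega

lemma idx_spec (a : ℕ → ℕ) (k m : ℕ) (hk : 1 ≤ k) (hm : m ≤ qPos a k k) :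
    1 ≤ idxF (qPos a k) k m ∧ m ≤ qPos a k (idxF (qPos a k) k m) := by
  have h : k ≤ idxF (qPos a k) k m ∨
      (1 ≤ idxF (qPos a k) k m ∧ m ≤ qPos a k (idxF (qPos a k) k m)) :=
    Nat.find_spec (p := fun i => k ≤ i ∨ (1 ≤ i ∧ m ≤ qPos a k i)) ⟨k, Or.inl le_rfl⟩
  have hle := idx_le (qPos a k) k m
  rcases h with h | h
  · have : idxF (qPos a k) k m = k := by omega
    rw [this]
    exact ⟨hk, hm⟩
  · exact h

lemma idx_eq_of (a : ℕ → ℕ) (k : ℕ) {m j : ℕ} (h1 : 1 ≤ j) (h2 : m ≤ qPos a k j)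
    (h3 : j ≤ k) (hmin : ∀ j', 1 ≤ j' → j' < j → qPos a k j' < m) :
    idxF (qPos a k) k m = j := by
  apply le_antisymm (Nat.find_le (Or.inr ⟨h1, h2⟩))
  by_contra h
  push_neg at h
  have h' : idxF (qPos a k) k m < j := h
  have hsp : k ≤ idxF (qPos a k) k m ∨
      (1 ≤ idxF (qPos a k) k m ∧ m ≤ qPos a k (idxF (qPos a k) k m)) :=
    Nat.find_spec (p := fun i => k ≤ i ∨ (1 ≤ i ∧ m ≤ qPos a k i)) ⟨k, Or.inl le_rfl⟩
  rcases hsp with hl | hr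
  · have := idx_le (qPos a k) k m
    omega
  · have := hmin _ hr.1 h'
    omega

lemma idx_q (a : ℕ → ℕ) (k : ℕ) {j : ℕ} (h1 : 1 ≤ j) (h3 : j ≤ k) :
    idxF (qPos a k) k (qPos a k j) = j :=
  idx_eq_of a k h1 le_rfl h3 (fun j' hj' hlt => q_lt a k hj' hlt)

/-- every position `m ≤ q k` is a pattern position or one less than a pattern position of
a doubled index -/
lemma q_cover (a : ℕ → ℕ) (k : ℕ) (hk : 1 ≤ k) {m : ℕ} (hm : m ≤ qPos a k k) :
    qPos a k (idxF (qPos a k) k m) = m ∨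
      (qPos a k (idxF (qPos a k) k m) = m + 1 ∧ idxF (qPos a k) k m ∈ dSet a k) := by
  obtain ⟨h1, h2⟩ := idx_spec a k m hk hm
  set j := idxF (qPos a k) k m with hj
  rcases Nat.eq_or_lt_of_le h2 with he | hlt
  · exact Or.inl he.symm
  right
  rcases Nat.eq_or_lt_of_le h1 with he1 | hgt1
  · -- j = 1
    have hj1 : j = 1 := he1.symm
    rw [hj1] at hlt ⊢
    have hq1 : qPos a k 1 = Dc a k 1 := q_one a k
    have hle1 := Dc_le_one a k
    have hd1 : 1 ∈ dSet a k := by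
      by_contra hc
      have := Dc_one a k
      rw [if_neg hc] at this
      omega
    have hD : Dc a k 1 = 1 := by rw [Dc_one, if_pos hd1]
    exact ⟨by omega, hd1⟩
  · -- j ≥ 2
    have hmin := idx_min (Q := qPos a k) (k := k) (m := m) (j := j - 1) (by omega) (by omega)
    have hsucc := q_succ a k (i := j - 1) (by omega)
    have hjj : j - 1 + 1 = j := by omega
    rw [hjj] at hsucc
    by_cases hd : j ∈ dSet a k
    · rw [if_pos hd] at hsucc
      exact ⟨by omega, hd⟩
    · rw [if_neg hd] at hsucc
      omega


end Core

def vFun (a : ℕ → ℕ) (k : ℕ) (m : ℕ) : ℕ :=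
  if qPos a k (idxF (qPos a k) k m) = m then 4 * a (idxF (qPos a k) k m)
  else if a (idxF (qPos a k) k m) < a (idxF (qPos a k) k m + 1) then
    4 * a (idxF (qPos a k) k m) + 1
  else 4 * a (idxF (qPos a k) k m) - 1

lemma vFun_pat {a : ℕ → ℕ} {k m j : ℕ} (hj : idxF (qPos a k) k m = j)
    (h : qPos a k j = m) : vFun a k m = 4 * a j := by
  rw [vFun, hj, if_pos h]

lemma vFun_fill {a : ℕ → ℕ} {k m j : ℕ} (hj : idxF (qPos a k) k m = j)
    (h : ¬ qPos a k j = m) :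
    vFun a k m = if a j < a (j + 1) then 4 * a j + 1 else 4 * a j - 1 := by
  rw [vFun, hj, if_neg h]

section Core2

variable {a : ℕ → ℕ} {k : ℕ}
  (ha0 : ∀ i, 1 ≤ i → i ≤ k → a i < a 0)
  (hinj : ∀ i j, 1 ≤ i → i ≤ k → 1 ≤ j → j ≤ k → a i = a j → i = j)
  (ha1 : ∀ i, 1 ≤ i → i ≤ k → 1 ≤ a i)

include ha0 hinj ha1 in
lemma construct_pat (hk : 1 ≤ k) (i : ℕ) (h1 : 1 ≤ i) (h2 : i ≤ k) :
    vFun a k (qPos a k i) = 4 * a i :=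
  vFun_pat (idx_q a k h1 h2) rfl

include ha0 hinj ha1 in
lemma construct_alt (hk : 1 ≤ k) (m : ℕ) (hmn : m + 1 < k + (dSet a k).card) :
    (m % 2 = 0 → vFun a k m < vFun a k (m + 1)) ∧
    (m % 2 ≠ 0 → vFun a k (m + 1) < vFun a k m) := by
  have hqk : qPos a k k = k - 1 + (dSet a k).card := q_top a k hk
  have hm : m ≤ qPos a k k := by omega
  have hm1 : m + 1 ≤ qPos a k k := by omega
  obtain ⟨hj1, hjge⟩ := idx_spec a k m hk hm
  set j := idxF (qPos a k) k m with hjdef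
  rcases q_cover a k hk hm with hpatm | ⟨hfill, hdj⟩
  · -- pattern at m
    rw [← hjdef] at hpatm
    have hvm : vFun a k m = 4 * a j := vFun_pat hjdef.symm hpatm
    have hjk : j < k := by
      have hle := idx_le (qPos a k) k m
      rw [← hjdef] at hle
      rcases Nat.eq_or_lt_of_le hle with he | h
      · exfalso; rw [he] at hpatm; omega
      · exact h
    have hidx1 : idxF (qPos a k) k (m + 1) = j + 1 := by
      apply idx_eq_of a k (by omega)
      · have := (q_succ_le a k hj1).1; omega
      · omega
      · intro j' h1' hlt'
        rcases Nat.eq_or_lt_of_le (by omega : j' ≤ j) with he | h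
        · rw [he]; omega
        · have := idx_min (Q := qPos a k) (k := k) (m := m) h1' h; omega
    have hsucc := q_succ a k hj1
    have hpar := parity_lemma ha0 hinj j hj1 hjk
    by_cases hdj1 : j + 1 ∈ dSet a k
    · -- filler at m+1
      have hq2 : qPos a k (j + 1) = m + 2 := by rw [if_pos hdj1] at hsucc; omega
      have hvm1 : vFun a k (m + 1) =
          if a (j + 1) < a (j + 1 + 1) then 4 * a (j + 1) + 1 else 4 * a (j + 1) - 1 :=
        vFun_fill hidx1 (by omega)
      have hj1k : j + 1 < k := (mem_dSet_lt hdj1).2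
      have hiff := (succ_mem_dSet hinj hj1 hj1k).1 hdj1
      have e2 : j + 1 + 1 = j + 2 := by omega
      rw [e2] at hvm1
      have ha1' := ha1 (j + 1) (by omega) (by omega)
      by_cases hup : a (j + 1) < a (j + 2)
      · rw [if_pos hup] at hvm1
        have hupj : a j < a (j + 1) := hiff.2 hup
        rw [hvm, hvm1]
        constructor <;> intro h <;> omega
      · rw [if_neg hup] at hvm1
        have hnupj : ¬ a j < a (j + 1) := fun hc => hup (hiff.1 hc)
        have hlo := a_lt_or hinj hj1 (by omega) (by omega : 1 ≤ j + 1) (by omega) (by omega)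
        rw [hvm, hvm1]
        constructor <;> intro h <;> omega
    · -- pattern at m+1
      have hq2 : qPos a k (j + 1) = m + 1 := by rw [if_neg hdj1] at hsucc; omega
      have hvm1 : vFun a k (m + 1) = 4 * a (j + 1) := vFun_pat hidx1 hq2
      have hlo := a_lt_or hinj hj1 (by omega) (by omega : 1 ≤ j + 1) (by omega) (by omega)
      rw [hvm, hvm1]
      constructor <;> intro h <;> omega
  · -- filler at m
    rw [← hjdef] at hfill hdj
    obtain ⟨hjd1, hjdk⟩ := mem_dSet_lt hdj
    have hvm : vFun a k m =
        if a j < a (j + 1) then 4 * a j + 1 else 4 * a j - 1 :=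
      vFun_fill hjdef.symm (by omega)
    have hidx1 : idxF (qPos a k) k (m + 1) = j := by
      apply idx_eq_of a k hjd1 (by omega) (by omega)
      intro j' h1' hlt'
      have := idx_min (Q := qPos a k) (k := k) (m := m) h1' hlt'
      omega
    have hvm1 : vFun a k (m + 1) = 4 * a j := vFun_pat hidx1 (by omega)
    have hpar := parity_lemma ha0 hinj j hjd1 hjdk
    have ha1' := ha1 j (by omega) (by omega)
    by_cases hup : a j < a (j + 1)
    · rw [if_pos hup] at hvm
      rw [hvm, hvm1]
      constructor <;> intro h <;> omega
    · rw [if_neg hup] at hvm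
      rw [hvm, hvm1]
      constructor <;> intro h <;> omega

include ha0 hinj ha1 in
lemma construct_inj (hk : 1 ≤ k) (m m' : ℕ) (hmn : m < k + (dSet a k).card)
    (hm'n : m' < k + (dSet a k).card) (heq : vFun a k m = vFun a k m') : m = m' := by
  have hqk : qPos a k k = k - 1 + (dSet a k).card := q_top a k hk
  have hm : m ≤ qPos a k k := by omega
  have hm' : m' ≤ qPos a k k := by omega
  obtain ⟨hj1, hjge⟩ := idx_spec a k m hk hm
  obtain ⟨hj1', hjge'⟩ := idx_spec a k m' hk hm'
  set j := idxF (qPos a k) k m with hjdef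
  set j' := idxF (qPos a k) k m' with hjdef'
  have hjk := idx_le (qPos a k) k m
  have hjk' := idx_le (qPos a k) k m'
  rw [← hjdef] at hjk
  rw [← hjdef'] at hjk'
  have hja := ha1 j (by omega) (by omega)
  have hja' := ha1 j' (by omega) (by omega)
  have hinjj : a j = a j' → j = j' := hinj j j' (by omega) (by omega) (by omega) (by omega)
  rcases q_cover a k hk hm with hpatm | ⟨hfill, hdj⟩ <;>
    rcases q_cover a k hk hm' with hpatm' | ⟨hfill', hdj'⟩
  · rw [← hjdef] at hpatm; rw [← hjdef'] at hpatm'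
    rw [vFun_pat hjdef.symm hpatm, vFun_pat hjdef'.symm hpatm'] at heq
    have : j = j' := hinjj (by omega)
    rw [this] at hpatm
    omega
  · rw [← hjdef] at hpatm; rw [← hjdef'] at hfill' hdj'
    rw [vFun_pat hjdef.symm hpatm, vFun_fill hjdef'.symm (by omega)] at heq
    split at heq <;> omega
  · rw [← hjdef] at hfill hdj; rw [← hjdef'] at hpatm'
    rw [vFun_fill hjdef.symm (by omega), vFun_pat hjdef'.symm hpatm'] at heq
    split at heq <;> omega
  · rw [← hjdef] at hfill hdj; rw [← hjdef'] at hfill' hdj'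
    rw [vFun_fill hjdef.symm (by omega), vFun_fill hjdef'.symm (by omega)] at heq
    by_cases h1 : a j < a (j + 1)
    · rw [if_pos h1] at heq
      by_cases h2 : a j' < a (j' + 1)
      · rw [if_pos h2] at heq
        have : j = j' := hinjj (by omega)
        rw [this] at hfill
        omega
      · rw [if_neg h2] at heq
        omega
    · rw [if_neg h1] at heq
      by_cases h2 : a j' < a (j' + 1)
      · rw [if_pos h2] at heq
        omega
      · rw [if_neg h2] at heq
        have : j = j' := hinjj (by omega)
        rw [this] at hfill
        omega

end Core2

example (k : ℕ) (p : Equiv.Perm (Fin k)) : dSet (entryVal p) k = doublingSet p := rfl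

lemma entry_val' {k : ℕ} (p : Equiv.Perm (Fin k)) {i : ℕ} (hi : 1 ≤ i) (hk : i ≤ k) :
    entryVal p i = (p ⟨i - 1, by omega⟩).val + 1 := by
  unfold entryVal
  rw [if_neg (by omega), dif_pos (by omega)]

lemma entry_val'' {k : ℕ} (p : Equiv.Perm (Fin k)) {i : ℕ} (hi : 1 ≤ i) (hk : i ≤ k)
    (x : Fin k) (hx : x.val = i - 1) : entryVal p i = (p x).val + 1 := by
  rw [entry_val' p hi hk]
  have hxe : (⟨i - 1, by omega⟩ : Fin k) = x := Fin.ext (show i - 1 = x.val from hx.symm)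
  rw [hxe]

lemma sub1_lt {i k : ℕ} (h1 : 1 ≤ i) (h2 : i ≤ k) : i - 1 < k := by omega

lemma min_lt' {x c : ℕ} (hc : 1 ≤ c) : min x (c - 1) < c := by omega

lemma entry_zero {k : ℕ} (p : Equiv.Perm (Fin k)) : entryVal p 0 = k + 1 := rfl

set_option maxHeartbeats 2000000 in
theorem stmt3 (k : ℕ) (p : Equiv.Perm (Fin k)) :
    IsLeast {n : ℕ | ∃ w : Equiv.Perm (Fin n), IsAlternating w ∧ ContainsPat w p}
      (k + doublingNumber p) := by
  have hdeq : dSet (entryVal p) k = doublingSet p := rfl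
  set a : ℕ → ℕ := entryVal p with ha
  have hcard : doublingNumber p = (dSet a k).card := by rw [doublingNumber, ← hdeq]
  have ha0 : ∀ i, 1 ≤ i → i ≤ k → a i < a 0 := by
    intro i h1 h2
    rw [ha, entry_val' p h1 h2, entry_zero]
    have := (p ⟨i - 1, by omega⟩).isLt
    omega
  have ha1 : ∀ i, 1 ≤ i → i ≤ k → 1 ≤ a i := by
    intro i h1 h2
    rw [ha, entry_val' p h1 h2]
    omega
  have hinj : ∀ i j, 1 ≤ i → i ≤ k → 1 ≤ j → j ≤ k → a i = a j → i = j := by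
    intro i j h1 h2 h3 h4 he
    rw [ha, entry_val' p h1 h2, entry_val' p h3 h4] at he
    have hv : (p ⟨i - 1, by omega⟩) = p ⟨j - 1, by omega⟩ := Fin.ext (by omega)
    have := p.injective hv
    rw [Fin.mk.injEq] at this
    omega
  rcases Nat.eq_zero_or_pos k with hk0 | hk
  · -- k = 0
    subst hk0
    have hd0 : doublingNumber p = 0 := by
      rw [hcard]
      have : dSet a 0 = ∅ := by
        apply Finset.eq_empty_of_forall_notMem
        intro x hx
        have := mem_dSet_lt hx
        omega
      rw [this, Finset.card_empty]
    constructor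
    · refine ⟨Equiv.refl _, fun i h => by omega, fun i => i.elim0, fun i => i.elim0, fun i => i.elim0⟩
    · intro n hn
      omega
  · -- k ≥ 1
    have hav : ∀ i : Fin k, a (i.val + 1) = (p i).val + 1 := by
      intro i
      rw [ha, entry_val' p (by omega) (by omega : i.val + 1 ≤ k)]
      have he : (⟨i.val + 1 - 1, by omega⟩ : Fin k) = i := Fin.ext (by simp)
      rw [he]
    constructor
    · -- membership: the constructed alternating permutation
      rw [hcard]
      have hqb : ∀ i, 1 ≤ i → i ≤ k → qPos a k i < k + (dSet a k).card := by
        intro i h1 h2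
        have htop := q_top a k hk
        rcases Nat.eq_or_lt_of_le h2 with he | hlt
        · rw [he, htop]; omega
        · have := q_lt a k h1 hlt
          omega
      have hvinj : Function.Injective
          (fun m : Fin (k + (dSet a k).card) => vFun a k m.val) := by
        intro x y hxy
        exact Fin.ext (construct_inj ha0 hinj ha1 hk x.val y.val x.isLt y.isLt hxy)
      refine ⟨stdPerm _ hvinj, ?_, ?_⟩
      · -- alternating
        intro i h
        have halt := construct_alt ha0 hinj ha1 hk i h
        by_cases hp : i % 2 = 0
        · rw [if_pos hp, stdPerm_lt]
          exact halt.1 hp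
        · rw [if_neg hp, stdPerm_lt]
          exact halt.2 hp
      · -- contains the pattern
        refine ⟨fun i => ⟨qPos a k (i.val + 1), hqb _ (by omega) i.isLt⟩, ?_, ?_⟩
        · intro x y hxy
          rw [Fin.mk_lt_mk]
          have hxy' : x.val < y.val := hxy
          exact q_lt a k (by omega) (by omega)
        · intro i j
          rw [stdPerm_lt]
          show p i < p j ↔ vFun a k (qPos a k (i.val + 1)) < vFun a k (qPos a k (j.val + 1))
          rw [construct_pat ha0 hinj ha1 hk _ (by omega) i.isLt,
            construct_pat ha0 hinj ha1 hk _ (by omega) j.isLt, hav i, hav j, Fin.lt_def]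
          omega
    · -- lower bound
      intro n hn
      obtain ⟨w, halt, f, hsm, hpat⟩ := hn
      rw [hcard]
      have hn1 : 1 ≤ n := by
        have := (f ⟨0, hk⟩).isLt
        omega
      refine lower_core ha0 hinj hk n
        (fun m => (w ⟨min m (n - 1), min_lt' hn1⟩).val) ?_
        (fun i => (f ⟨min (i - 1) (k - 1), min_lt' hk⟩).val) ?_ ?_ ?_
      · -- alternation of values
        intro m hm
        have e1 : (⟨min m (n - 1), min_lt' hn1⟩ : Fin n) = ⟨m, Nat.lt_of_succ_lt hm⟩ :=
          Fin.ext (show min m (n - 1) = m by omega)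
        have e2 : (⟨min (m + 1) (n - 1), min_lt' hn1⟩ : Fin n) = ⟨m + 1, hm⟩ :=
          Fin.ext (show min (m + 1) (n - 1) = m + 1 by omega)
        show ((m % 2 = 0 → ((w ⟨min m (n - 1), min_lt' hn1⟩).val <
            (w ⟨min (m + 1) (n - 1), min_lt' hn1⟩).val)) ∧
          (m % 2 = 1 → ((w ⟨min (m + 1) (n - 1), min_lt' hn1⟩).val <
            (w ⟨min m (n - 1), min_lt' hn1⟩).val)))
        rw [e1, e2]
        have hw := halt m hm
        constructor
        · intro hp
          rw [if_pos hp] at hw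
          exact hw
        · intro hp
          rw [if_neg (by omega)] at hw
          exact hw
      · -- in range
        intro i h1 h2
        exact (f _).isLt
      · -- strictly increasing
        intro i h1 h2
        exact hsm (show (⟨min (i - 1) (k - 1), min_lt' hk⟩ : Fin k) <
          ⟨min (i + 1 - 1) (k - 1), min_lt' hk⟩ by rw [Fin.mk_lt_mk]; omega)
      · -- pattern values
        intro i j h1 h2 h3 h4
        have eA : (⟨min (i - 1) (k - 1), min_lt' hk⟩ : Fin k) = ⟨i - 1, sub1_lt h1 h2⟩ :=
          Fin.ext (show min (i - 1) (k - 1) = i - 1 by omega)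
        have eB : (⟨min (j - 1) (k - 1), min_lt' hk⟩ : Fin k) = ⟨j - 1, sub1_lt h3 h4⟩ :=
          Fin.ext (show min (j - 1) (k - 1) = j - 1 by omega)
        have eC : ∀ x : Fin k, (⟨min (f x).val (n - 1), min_lt' hn1⟩ : Fin n) = f x :=
          fun x => Fin.ext (by
            have := (f x).isLt
            show min (f x).val (n - 1) = (f x).val
            omega)
        show a i < a j ↔
          (w ⟨min ((f ⟨min (i - 1) (k - 1), min_lt' hk⟩).val) (n - 1), min_lt' hn1⟩).val <
          (w ⟨min ((f ⟨min (j - 1) (k - 1), min_lt' hk⟩).val) (n - 1), min_lt' hn1⟩).val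
        rw [eA, eB, eC, eC]
        have hw := hpat ⟨i - 1, sub1_lt h1 h2⟩ ⟨j - 1, sub1_lt h3 h4⟩
        rw [Fin.lt_def, Fin.lt_def] at hw
        rw [ha, entry_val'' p h1 h2 ⟨i - 1, sub1_lt h1 h2⟩ rfl,
          entry_val'' p h3 h4 ⟨j - 1, sub1_lt h3 h4⟩ rfl]
        constructor
        · intro hh
          exact hw.1 (by omega)
        · intro hh
          have := hw.2 hh
          omega
end
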